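/- Let σ, σ₀, a, c, C_v > 0 be constants and suppose smooth functions ρ(t,x), g(t,x,μ), T(t,x) satisfy the ε = 0 micro-macro limit system: (1/c)∂ₜρ + (1/√σ₀)⟨μ ∂ₓ g⟩ = -(1/2)C_v ∂ₜT, √σ₀ μ ∂ₓρ = -σ g, and 2ρ = acT⁴, with ⟨f⟩ := (1/2)∫_{-1}^1 f(μ)dμ. Then T satisfies ∂ₜ(C_v T) + a ∂ₜ(T⁴) = ∂ₓ( (ac/(3σ)) ∂ₓ(T⁴) ). -/

import Mathlib

theorem micro_macro_diffusion_limit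
    (σ σ₀ a c C_v : ℝ) (hσ : σ > 0) (hσ₀ : σ₀ > 0) (ha : a > 0) (hc : c > 0) (hCv : C_v > 0)
    (g : ℝ → ℝ → ℝ → ℝ) (ρ T : ℝ → ℝ → ℝ)
    (hg_smooth : ContDiff ℝ (⊤ : ℕ∞) (fun p : ℝ × ℝ × ℝ => g p.1 p.2.1 p.2.2))
    (hρ_smooth : ContDiff ℝ (⊤ : ℕ∞) (fun p : ℝ × ℝ => ρ p.1 p.2))
    (hT_smooth : ContDiff ℝ (⊤ : ℕ∞) (fun p : ℝ × ℝ => T p.1 p.2))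
    (heq1 : ∀ t x, (1 / c) * deriv (fun t' => ρ t' x) t
        + (1 / Real.sqrt σ₀) * ((1 / 2) * ∫ μ in (-1 : ℝ)..1, μ * deriv (fun x' => g t x' μ) x)
        = -(1 / 2) * C_v * deriv (fun t' => T t' x) t)
    (heq2 : ∀ t x μ, Real.sqrt σ₀ * μ * deriv (fun x' => ρ t x') x = -σ * g t x μ)
    (heq3 : ∀ t x, 2 * ρ t x = a * c * (T t x) ^ 4) :
    ∀ t x, deriv (fun t' => C_v * T t' x) t + a * deriv (fun t' => (T t' x) ^ 4) t
      = deriv (fun x' => (a * c / (3 * σ)) * deriv (fun x'' => (T t x'') ^ 4) x') x := by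
  intro t x
  have hσ' : σ ≠ 0 := ne_of_gt hσ
  have hs : Real.sqrt σ₀ ≠ 0 := ne_of_gt (Real.sqrt_pos.mpr hσ₀)
  have hac : a * c ≠ 0 := by positivity
  -- partial smoothness
  have hTt : ContDiff ℝ (⊤ : ℕ∞) (fun t' => T t' x) :=
    hT_smooth.comp (contDiff_id.prodMk contDiff_const)
  have hρt : ContDiff ℝ (⊤ : ℕ∞) (fun t' => ρ t' x) :=
    hρ_smooth.comp (contDiff_id.prodMk contDiff_const)
  have hρx : ContDiff ℝ (⊤ : ℕ∞) (fun x' => ρ t x') :=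
    hρ_smooth.comp (contDiff_const.prodMk contDiff_id)
  have hρx' : ContDiff ℝ (↑(⊤ : ℕ∞)) (fun x' => ρ t x') := hρx.of_le (by simp)
  have hDρx : ContDiff ℝ (↑(⊤ : ℕ∞)) (deriv (fun x' => ρ t x')) :=
    (contDiff_infty_iff_deriv.mp hρx').2
  have hDρx_diff : DifferentiableAt ℝ (deriv (fun x' => ρ t x')) x :=
    (hDρx.differentiable (by simp)) x
  -- pointwise relation ρ = a c / 2 * T^4
  have hrep : ∀ t' x', ρ t' x' = a * c / 2 * (T t' x') ^ 4 := by
    intro t' x'; have := heq3 t' x'; linarith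
  -- g in terms of deriv ρ
  have hgrep : ∀ μ : ℝ, (fun x' => g t x' μ)
      = fun x' => (-(Real.sqrt σ₀ * μ / σ)) * deriv (fun x'' => ρ t x'') x' := by
    intro μ; funext x'
    have h := heq2 t x' μ
    field_simp
    linarith
  have hgderiv : ∀ μ : ℝ, deriv (fun x' => g t x' μ) x
      = (-(Real.sqrt σ₀ * μ / σ)) * deriv (deriv (fun x'' => ρ t x'')) x := by
    intro μ
    rw [hgrep μ, deriv_const_mul _ hDρx_diff]
  -- the integral
  have hint : (∫ μ in (-1 : ℝ)..1, μ * deriv (fun x' => g t x' μ) x)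
      = (-(Real.sqrt σ₀ / σ) * deriv (deriv (fun x'' => ρ t x'')) x) * (2 / 3) := by
    have h1 : (fun μ : ℝ => μ * deriv (fun x' => g t x' μ) x)
        = fun μ : ℝ => (-(Real.sqrt σ₀ / σ) * deriv (deriv (fun x'' => ρ t x'')) x) * μ ^ 2 := by
      funext μ; rw [hgderiv μ]; ring
    rw [h1, intervalIntegral.integral_const_mul, integral_pow]
    norm_num
  -- rewrite heq1
  have hmain : (1 / c) * deriv (fun t' => ρ t' x) t
      - (1 / (3 * σ)) * deriv (deriv (fun x'' => ρ t x'')) x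
      = -(1 / 2) * C_v * deriv (fun t' => T t' x) t := by
    have h := heq1 t x
    rw [hint] at h
    have hterm : (1 / Real.sqrt σ₀) * ((1 / 2) *
        ((-(Real.sqrt σ₀ / σ) * deriv (deriv (fun x'' => ρ t x'')) x) * (2 / 3)))
        = -(1 / (3 * σ)) * deriv (deriv (fun x'' => ρ t x'')) x := by
      field_simp
    rw [hterm] at h
    linarith
  -- T^4 derivatives in terms of ρ derivatives
  have hT4t : (fun t' => (T t' x) ^ 4) = fun t' => (2 / (a * c)) * ρ t' x := by
    funext t'; rw [hrep t' x]; field_simp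
  have hT4x : (fun x'' => (T t x'') ^ 4) = fun x'' => (2 / (a * c)) * ρ t x'' := by
    funext x''; rw [hrep t x'']; field_simp
  have hderivT4t : deriv (fun t' => (T t' x) ^ 4) t
      = (2 / (a * c)) * deriv (fun t' => ρ t' x) t := by
    rw [hT4t, deriv_const_mul _ ((hρt.differentiable (by simp)) t)]
  have hderivT4x : deriv (fun x'' => (T t x'') ^ 4) = fun x' =>
      (2 / (a * c)) * deriv (fun x'' => ρ t x'') x' := by
    funext x'
    rw [hT4x, deriv_const_mul _ ((hρx.differentiable (by simp)) x')]
  -- compute both sides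
  have hLHS : deriv (fun t' => C_v * T t' x) t = C_v * deriv (fun t' => T t' x) t :=
    deriv_const_mul _ ((hTt.differentiable (by simp)) t)
  have hRHS : deriv (fun x' => (a * c / (3 * σ)) * deriv (fun x'' => (T t x'') ^ 4) x') x
      = (2 / (3 * σ)) * deriv (deriv (fun x'' => ρ t x'')) x := by
    have hfun : (fun x' => (a * c / (3 * σ)) * deriv (fun x'' => (T t x'') ^ 4) x')
        = fun x' => (2 / (3 * σ)) * deriv (fun x'' => ρ t x'') x' := by
      funext x'; rw [hderivT4x]; field_simp
    rw [hfun, deriv_const_mul _ hDρx_diff]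
  rw [hLHS, hRHS, hderivT4t]
  have h2 : a * ((2 / (a * c)) * deriv (fun t' => ρ t' x) t)
      = 2 * ((1 / c) * deriv (fun t' => ρ t' x) t) := by field_simp
  have h3 : (2 / (3 * σ)) * deriv (deriv (fun x'' => ρ t x'')) x
      = 2 * ((1 / (3 * σ)) * deriv (deriv (fun x'' => ρ t x'')) x) := by ring
  rw [h2, h3]
  linarith
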